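/- arXiv:2407.13795 — 5 statements merged into one kernel-verified Lean document; each statement's English description precedes it below -/
import Mathlib

section
/- (Wang) Let p, q ∈ ℂ[x,y] with Jac(p,q) = p_x q_y − p_y q_x ∈ ℂ*. Then ℂ(p,q) ∩ ℂ[x,y] = ℂ[p,q]: an element of ℂ[x,y] lies in ℂ[p,q] if and only if its image in ℂ(x,y) lies in the subfield ℂ(p,q). -/
open MvPolynomial

noncomputable section

/-- The polynomial ring ℂ[x,y] (x = X 0, y = X 1). -/
abbrev Rxy : Type := MvPolynomial (Fin 2) ℂ

/-- The field of fractions ℂ(x,y). -/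
abbrev Kxy : Type := FractionRing Rxy

/-- The Jacobian Jac(p,q) = p_x q_y − p_y q_x. -/
def jacPQ (p q : Rxy) : Rxy :=
  pderiv 0 p * pderiv 1 q - pderiv 1 p * pderiv 0 q

/-- (p,q) is a Keller map: Jac(p,q) is a nonzero constant. -/
def IsKeller (p q : Rxy) : Prop :=
  ∃ c : ℂ, c ≠ 0 ∧ jacPQ p q = C c

/-!
Write `r = F(p,q) / G(p,q)` with `F, G ∈ ℂ[X,Y]` coprime. By Gauss's lemma and Bézout over
`ℂ(Y)[X]`, the ideal `(F, G)` contains a nonzero polynomial in `Y` alone, and likewise one in `X`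
alone. Since these split over `ℂ`, a prime `t` dividing both `F(p,q)` and `G(p,q)` divides some
`p - α` and `q - β`; writing `p - α = t a`, `q - β = t b` shows that `t` divides `Jac(p,q)`, a
nonzero constant. Hence `F(p,q)` and `G(p,q)` are coprime, and as `G(p,q)` divides
`r G(p,q) = F(p,q)`, it is a unit, i.e. a nonzero constant, so `r ∈ ℂ[p,q]`.
-/

open scoped Polynomial

theorem IsRelPrime.map_mulEquiv {M N F : Type*} [Monoid M] [Monoid N] [EquivLike F M N]
    [MulEquivClass F M N] (e : F) {x y : M} (h : IsRelPrime x y) : IsRelPrime (e x) (e y) := by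
  intro d hx hy
  obtain ⟨d, rfl⟩ := EquivLike.surjective e d
  exact (h ((map_dvd_iff e).mp hx) ((map_dvd_iff e).mp hy)).map e

namespace Polynomial

open IsLocalization
open scoped nonZeroDivisors

variable {A : Type*} [CommRing A] [IsDomain A] [NormalizedGCDMonoid A]

theorem isRelPrime_fraction_map (K : Type*) [Field K] [Algebra A K] [IsFractionRing A K]
    {f g : A[X]} (h : IsRelPrime f g) :
    IsRelPrime (f.map (algebraMap A K)) (g.map (algebraMap A K)) := by
  intro d hf hg
  rcases eq_or_ne d 0 with rfl | hd
  · have hinj := map_injective _ (IsFractionRing.injective A K)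
    rw [zero_dvd_iff, ← Polynomial.map_zero (algebraMap A K), hinj.eq_iff] at hf hg
    subst hf hg
    exact absurd (h dvd_rfl dvd_rfl) not_isUnit_zero
  set d₀ := (integerNormalization A⁰ d).primPart
  have hd₀ : d₀.map (algebraMap A K) ∣ d := by
    obtain ⟨b, hb, hbd⟩ := integerNormalization_spec A⁰ d
    have hunit : IsUnit (C (algebraMap A K b)) :=
      isUnit_C.mpr (IsFractionRing.to_map_ne_zero_of_mem_nonZeroDivisors hb).isUnit
    rw [← hunit.dvd_mul_left, ← smul_eq_C_mul, algebraMap_smul, ← hbd]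
    exact Polynomial.map_dvd _ (primPart_dvd _)
  refine isUnit_or_eq_zero_of_isUnit_integerNormalization_primPart hd (h ?_ ?_) <;>
    exact (isPrimitive_primPart _).dvd_of_fraction_map_dvd_fraction_map (hd₀.trans ‹_›)

theorem exists_C_mem_span_pair_of_isRelPrime {f g : A[X]} (h : IsRelPrime f g) :
    ∃ c : A, c ≠ 0 ∧ C c ∈ Ideal.span {f, g} := by
  let K := FractionRing A
  obtain ⟨a, b, hab⟩ := isRelPrime_iff_isCoprime.mp (isRelPrime_fraction_map K h)
  obtain ⟨s, hs, hsa⟩ := integerNormalization_spec A⁰ a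
  obtain ⟨t, ht, htb⟩ := integerNormalization_spec A⁰ b
  refine ⟨s * t, mul_ne_zero (nonZeroDivisors.ne_zero hs) (nonZeroDivisors.ne_zero ht),
    Ideal.mem_span_pair.mpr ⟨C t * integerNormalization A⁰ a, C s * integerNormalization A⁰ b, ?_⟩⟩
  apply map_injective _ (IsFractionRing.injective A K)
  simp only [Polynomial.map_add, Polynomial.map_mul, map_C, hsa, htb]
  rw [← algebraMap_smul K s, ← algebraMap_smul K t, smul_eq_C_mul, smul_eq_C_mul, map_mul, map_mul]
  linear_combination C (algebraMap A K s) * C (algebraMap A K t) * hab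

end Polynomial

namespace MvPolynomial

variable {k : Type*} [Field k]

theorem exists_aeval_X_one_mem_span_pair_of_isRelPrime {F G : MvPolynomial (Fin 2) k}
    (h : IsRelPrime F G) : ∃ d : k[X], d ≠ 0 ∧ Polynomial.aeval (X 1) d ∈ Ideal.span {F, G} := by
  classical
  let e : MvPolynomial (Fin 2) k ≃ₐ[k] k[X][X] :=
    (finSuccEquiv k 1).trans (Polynomial.mapAlgEquiv (uniqueAlgEquiv k (Fin 1)))
  have he : ∀ d : k[X], e (Polynomial.aeval (X 1) d) = Polynomial.C d := fun d => by
    have hX : e (X 1) = Polynomial.C Polynomial.X := by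
      rw [AlgEquiv.trans_apply, show (1 : Fin 2) = Fin.succ 0 from rfl, finSuccEquiv_X_succ]
      simp
    rw [← Polynomial.aeval_algHom_apply, hX, ← Polynomial.algebraMap_eq,
      Polynomial.aeval_algebraMap_apply, Polynomial.aeval_X_left_apply]
  obtain ⟨d, hd, hmem⟩ := Polynomial.exists_C_mem_span_pair_of_isRelPrime (h.map_mulEquiv e)
  obtain ⟨a, b, hab⟩ := Ideal.mem_span_pair.mp hmem
  refine ⟨d, hd, Ideal.mem_span_pair.mpr ⟨e.symm a, e.symm b, e.injective ?_⟩⟩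
  simp [hab, he]

end MvPolynomial

theorem Prime.exists_dvd_sub_algebraMap_of_dvd_aeval {k R : Type*} [Field k] [IsAlgClosed k]
    [CommRing R] [Algebra k R] {t : R} (ht : Prime t) {P : k[X]} (hP : P ≠ 0) {w : R}
    (h : t ∣ Polynomial.aeval w P) : ∃ α : k, t ∣ w - algebraMap k R α := by
  rw [(IsAlgClosed.splits P).eq_prod_roots, map_mul, Polynomial.aeval_C, map_multiset_prod,
    Multiset.map_map, ((Polynomial.leadingCoeff_ne_zero.mpr hP).isUnit.map _).dvd_mul_left] at h
  obtain ⟨α, -, hα⟩ := ht.exists_mem_multiset_map_dvd h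
  exact ⟨α, by simpa using hα⟩

theorem MvPolynomial.exists_dvd_sub_algebraMap_of_isRelPrime {k R : Type*} [Field k]
    [IsAlgClosed k] [CommRing R] [Algebra k R] {F G : MvPolynomial (Fin 2) k}
    (h : IsRelPrime F G) {v : Fin 2 → R} {t : R} (ht : Prime t) (hF : t ∣ aeval v F)
    (hG : t ∣ aeval v G) (i : Fin 2) : ∃ α : k, t ∣ v i - algebraMap k R α := by
  wlog hi : i = 1 generalizing F G v i
  · let σ := Equiv.swap i 1
    have hσ : (v ∘ σ) ∘ σ = v := by ext; simp [σ]
    have key := this (h.map_mulEquiv (renameEquiv k σ)) (v := v ∘ σ)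
      (by simpa [aeval_rename, hσ]) (by simpa [aeval_rename, hσ]) 1 rfl
    simpa [σ] using key
  subst hi
  obtain ⟨d, hd, hmem⟩ := exists_aeval_X_one_mem_span_pair_of_isRelPrime h
  obtain ⟨a, b, hab⟩ := Ideal.mem_span_pair.mp hmem
  refine ht.exists_dvd_sub_algebraMap_of_dvd_aeval hd ?_
  rw [← aeval_X (R := k) v 1, Polynomial.aeval_algHom_apply, ← hab, map_add, map_mul, map_mul]
  exact dvd_add (dvd_mul_of_dvd_right hF _) (dvd_mul_of_dvd_right hG _)

theorem jacPQ_sub_C (p q : Rxy) (a b : ℂ) : jacPQ (p - C a) (q - C b) = jacPQ p q := by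
  simp [jacPQ]

theorem dvd_jacPQ_mul_mul (t a b : Rxy) : t ∣ jacPQ (t * a) (t * b) := by
  -- the two terms `∂₀t ∂₁t a b` without a factor `t` cancel
  refine ⟨pderiv 0 t * a * pderiv 1 b + pderiv 0 a * pderiv 1 t * b + t * pderiv 0 a * pderiv 1 b
    - pderiv 1 t * a * pderiv 0 b - pderiv 1 a * pderiv 0 t * b - t * pderiv 1 a * pderiv 0 b, ?_⟩
  simp only [jacPQ, pderiv_mul]
  ring

theorem IsKeller.isUnit_of_dvd_sub_C {p q t : Rxy} (hK : IsKeller p q) {a b : ℂ}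
    (hp : t ∣ p - C a) (hq : t ∣ q - C b) : IsUnit t := by
  obtain ⟨c, hc, hJ⟩ := hK
  obtain ⟨u, hu⟩ := hp
  obtain ⟨w, hw⟩ := hq
  have htc : t ∣ C c := by
    rw [← hJ, ← jacPQ_sub_C p q a b, hu, hw]
    exact dvd_jacPQ_mul_mul t u w
  exact isUnit_of_dvd_unit htc (hc.isUnit.map C)

theorem IsKeller.isRelPrime_aeval {p q : Rxy} (hK : IsKeller p q) {F G : MvPolynomial (Fin 2) ℂ}
    (h : IsRelPrime F G) : IsRelPrime (aeval ![p, q] F) (aeval ![p, q] G) := by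
  have no_common_prime (t : Rxy) (ht : Prime t) (hF : t ∣ aeval ![p, q] F)
      (hG : t ∣ aeval ![p, q] G) : False := by
    obtain ⟨a, ha⟩ := exists_dvd_sub_algebraMap_of_isRelPrime h ht hF hG 0
    obtain ⟨b, hb⟩ := exists_dvd_sub_algebraMap_of_isRelPrime h ht hF hG 1
    exact ht.not_isUnit (hK.isUnit_of_dvd_sub_C (by simpa using ha) (by simpa using hb))
  by_cases h0 : aeval ![p, q] F = 0 ∧ aeval ![p, q] G = 0
  · exact (no_common_prime (X 0) X_prime (h0.1 ▸ dvd_zero _) (h0.2 ▸ dvd_zero _)).elim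
  · exact WfDvdMonoid.isRelPrime_of_no_irreducible_factors h0 fun t ht hF hG =>
      no_common_prime t ht.prime hF hG

theorem IsKeller.mem_adjoin_of_mul_aeval_eq {p q : Rxy} (hK : IsKeller p q) {r : Rxy}
    {F G : MvPolynomial (Fin 2) ℂ} (hG : aeval ![p, q] G ≠ 0)
    (hr : r * aeval ![p, q] G = aeval ![p, q] F) : r ∈ Algebra.adjoin ℂ {p, q} := by
  obtain ⟨F', G', c, hFG', rfl, rfl⟩ :=
    UniqueFactorizationMonoid.exists_reduced_factors' F G (by rintro rfl; simp at hG)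
  rw [map_mul] at hG
  rw [map_mul, map_mul, mul_left_comm] at hr
  have hrG' := mul_left_cancel₀ (left_ne_zero_of_mul hG) hr
  obtain ⟨u, hu, huG⟩ := isUnit_iff_eq_C_of_isReduced.mp
    (hK.isRelPrime_aeval hFG' (Dvd.intro_left r hrG') dvd_rfl)
  have hr_eq : r = aeval ![p, q] F' * C u⁻¹ := by
    rw [← hrG', huG, mul_assoc, ← C_mul, mul_inv_cancel₀ hu.ne_zero, C_1, mul_one]
  rw [hr_eq, ← Matrix.range_cons_cons_empty p q ![], Algebra.adjoin_range_eq_range_aeval]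
  exact mul_mem ⟨F', rfl⟩ (Subalgebra.algebraMap_mem _ u⁻¹)

theorem exists_mul_aeval_eq_of_algebraMap_mem_adjoin {k R K ι : Type*} [Field k] [CommRing R]
    [IsDomain R] [Algebra k R] [Field K] [Algebra R K] [Algebra k K] [IsScalarTower k R K]
    [IsFractionRing R K] {v : ι → R} {r : R}
    (hr : algebraMap R K r ∈ IntermediateField.adjoin k (Set.range (algebraMap R K ∘ v))) :
    ∃ F G : MvPolynomial ι k, aeval v G ≠ 0 ∧ r * aeval v G = aeval v F := by
  obtain ⟨F, G, hFG⟩ := (IntermediateField.mem_adjoin_range_iff k _ _).mp hr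
  have hφ (P : MvPolynomial ι k) : aeval (algebraMap R K ∘ v) P = algebraMap R K (aeval v P) :=
    (comp_aeval_apply (f := v) (IsScalarTower.toAlgHom k R K) P).symm
  rw [hφ, hφ] at hFG
  by_cases hG : aeval v G = 0
  · refine ⟨0, 1, by simp, ?_⟩
    rw [hG, map_zero, div_zero, IsFractionRing.to_map_eq_zero_iff] at hFG
    simp [hFG]
  · refine ⟨F, G, hG, IsFractionRing.injective R K ?_⟩
    rw [map_mul, hFG, div_mul_cancel₀ _ (IsFractionRing.to_map_ne_zero_of_mem_nonZeroDivisors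
      (mem_nonZeroDivisors_of_ne_zero hG))]

/-- (Wang) ℂ(p,q) ∩ ℂ[x,y] = ℂ[p,q]: a polynomial lies in ℂ[p,q] if and only
if its image in ℂ(x,y) lies in the subfield ℂ(p,q). -/
theorem wang_intersection (p q : Rxy) (hK : IsKeller p q) :
    ∀ r : Rxy,
      r ∈ Algebra.adjoin ℂ ({p, q} : Set Rxy) ↔
      algebraMap Rxy Kxy r ∈ IntermediateField.adjoin ℂ
        ({algebraMap Rxy Kxy p, algebraMap Rxy Kxy q} : Set Kxy) := by
  intro r
  constructor
  · intro hr
    have hmap := Subalgebra.mem_map (f := IsScalarTower.toAlgHom ℂ Rxy Kxy) |>.mpr ⟨r, hr, rfl⟩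
    rw [← Algebra.adjoin_image, Set.image_pair] at hmap
    exact IntermediateField.algebra_adjoin_le_adjoin ℂ _ hmap
  · intro hr
    rw [← Set.image_pair, ← Matrix.range_cons_cons_empty p q ![], ← Set.range_comp] at hr
    obtain ⟨F, G, hG, hFG⟩ := exists_mul_aeval_eq_of_algebraMap_mem_adjoin hr
    exact hK.mem_adjoin_of_mul_aeval_eq hG hFG
end
end

section
/- (Jedrzejewicz–Zieliński) Let A be a UFD (an integral domain with unique factorization) and R ⊆ A a subring such that R* = A* (the units of R and of A coincide) and F(R) ∩ A = R, where F(R) is the field of fractions of R viewed inside the field of fractions of A. Then the following are equivalent: (i) every square-free element of R is square-free as an element of A; (ii) R is square-factorially closed in A, i.e., for every u ∈ A and every square-free v ∈ A, if u²v ∈ R − {0} then u ∈ R and v ∈ R. -/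
/-- An element `v` of an integral domain is square-free if it is nonzero and
there is no non-unit `w` with `w²` dividing `v`. -/
def SqFreeElem {A : Type*} [CommRing A] (v : A) : Prop :=
  v ≠ 0 ∧ ∀ w : A, ¬ IsUnit w → ¬ (w * w ∣ v)

/-- `R` is square-factorially closed in `A`: for every `u ∈ A` and every
square-free `v ∈ A`, if `u²v ∈ R − {0}` then `u ∈ R` and `v ∈ R`. -/
def SqFactClosed {A : Type*} [CommRing A] (R : Subring A) : Prop :=
  ∀ u v : A, SqFreeElem v → u * u * v ∈ R → u * u * v ≠ 0 → u ∈ R ∧ v ∈ R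

/-! In a UFD every nonzero element is `a²b` with `b` square-free, and `a`, `b` are unique up to
units. Since `R* = A*`, a strict divisibility chain in `R` is one in `A`, so `R` admits such
decompositions too, with `b` square-free in `R`. Given (i), the decomposition of `u²v` in `R` is
one in `A`, so `u` and `v` differ from its factors by units, which lie in `R`. Conversely, if `w²`
divides a square-free `r ∈ R` in `A`, write `r = (ws)²c` with `c` square-free in `A`: (ii) puts
`ws` and `c` in `R`, so `ws`, and hence `w`, is a unit. -/

theorem sqFreeElem_iff {A : Type*} [CommRing A] {v : A} :
    SqFreeElem v ↔ v ≠ 0 ∧ Squarefree v :=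
  and_congr_right fun _ => forall_congr' fun _ => not_imp_not

theorem WfDvdMonoid.exists_mul_self_mul_squarefree {α : Type*} [CommMonoidWithZero α]
    [WfDvdMonoid α] {x : α} (hx : x ≠ 0) : ∃ a b : α, a * a * b = x ∧ Squarefree b := by
  induction x using WellFounded.induction (wellFounded_dvdNotUnit (α := α)) with
  | h x ih =>
    by_cases hsq : Squarefree x
    · exact ⟨1, x, by rw [one_mul, one_mul], hsq⟩
    obtain ⟨c, ⟨d, rfl⟩, hc⟩ : ∃ c, c * c ∣ x ∧ ¬IsUnit c := by
      simpa [Squarefree] using hsq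
    have hd : d ≠ 0 := right_ne_zero_of_mul hx
    obtain ⟨a, b, rfl, hb⟩ :=
      ih d ⟨hd, c * c, fun hcc => hc (isUnit_of_mul_isUnit_left hcc), mul_comm _ _⟩ hd
    exact ⟨c * a, b, by ac_rfl, hb⟩

namespace UniqueFactorizationMonoid

variable {α : Type*} [CommMonoidWithZero α] [UniqueFactorizationMonoid α]

/-- Induction on the prime factors of `u`: a prime `p ∣ u` must divide `a`, since otherwise
`p² ∣ b`. -/
theorem dvd_of_mul_self_mul_eq_of_squarefree {u v a b : α} (h : u * u * v = a * a * b)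
    (hb : Squarefree b) : u ∣ a := by
  induction u using induction_on_prime generalizing a with
  | h₁ =>
    rcases eq_or_ne a 0 with rfl | ha
    · exact dvd_rfl
    have := nontrivial_of_ne a 0 ha
    exact absurd (by simpa using h.symm) (mul_ne_zero (mul_ne_zero ha ha) hb.ne_zero)
  | h₂ u hu => exact hu.dvd
  | h₃ u p _ hp ih =>
    have hpa : p ∣ a := by
      by_contra hpa
      have hpp : p ^ 2 ∣ a * a * b := h ▸ ⟨u * u * v, by rw [sq]; ac_rfl⟩
      have := hp.pow_dvd_of_dvd_mul_left 2 (fun hpaa => hpa ((hp.dvd_or_dvd hpaa).elim id id)) hpp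
      exact hp.not_isUnit (hb p (by rwa [sq] at this))
    obtain ⟨a, rfl⟩ := hpa
    have h' : p * p * (u * u * v) = p * p * (a * a * b) := by convert h using 1 <;> ac_rfl
    exact mul_dvd_mul_left p (ih (mul_left_cancel₀ (mul_ne_zero hp.ne_zero hp.ne_zero) h'))

theorem exists_unit_of_mul_self_mul_eq_of_squarefree {u v a b : α} (h : u * u * v = a * a * b)
    (hu : u ≠ 0) (hv : Squarefree v) (hb : Squarefree b) :
    ∃ e : αˣ, u * e = a ∧ v = e * e * b := by
  obtain ⟨e, rfl⟩ := associated_of_dvd_dvd (dvd_of_mul_self_mul_eq_of_squarefree h hb)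
    (dvd_of_mul_self_mul_eq_of_squarefree h.symm hv)
  exact ⟨e, rfl, mul_left_cancel₀ (mul_ne_zero hu hu) (h.trans (by ac_rfl))⟩

end UniqueFactorizationMonoid

open UniqueFactorizationMonoid

namespace Subring

variable {A : Type*} [CommRing A] (R : Subring A)

theorem isUnit_coe_iff (hunits : ∀ a : A, IsUnit a → a ∈ R) {w : R} :
    IsUnit (w : A) ↔ IsUnit w := by
  refine ⟨fun hw => ?_, fun hw => hw.map R.subtype⟩
  have hinv : ((hw.unit⁻¹ : Aˣ) : A) ∈ R := hunits _ (Units.isUnit _)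
  exact IsUnit.of_mul_eq_one (a := w) ⟨_, hinv⟩ (Subtype.ext hw.mul_val_inv)

theorem wfDvdMonoid [WfDvdMonoid A] (hunits : ∀ a : A, IsUnit a → a ∈ R) : WfDvdMonoid R :=
  ⟨(InvImage.wf ((↑) : R → A) wellFounded_dvdNotUnit).mono fun _ _ ⟨hx, c, hc, hxy⟩ =>
    ⟨fun h => hx (Subtype.ext h), c, (R.isUnit_coe_iff hunits).not.mpr hc,
      congrArg Subtype.val hxy⟩⟩

theorem squarefree_coe_of_sqFactClosed [WfDvdMonoid A] (hR : SqFactClosed R) {r : R}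
    (hr0 : r ≠ 0) (hr : Squarefree r) : Squarefree (r : A) := by
  have hr0' : (r : A) ≠ 0 := fun h => hr0 (Subtype.ext h)
  rintro w ⟨t, ht⟩
  have ht0 : t ≠ 0 := right_ne_zero_of_mul (ht ▸ hr0')
  obtain ⟨s, c, rfl, hc⟩ := WfDvdMonoid.exists_mul_self_mul_squarefree ht0
  have hr_eq : (r : A) = w * s * (w * s) * c := by rw [ht]; ring
  obtain ⟨hws, hcR⟩ := hR (w * s) c (sqFreeElem_iff.mpr ⟨right_ne_zero_of_mul ht0, hc⟩)
    (hr_eq ▸ r.2) (hr_eq ▸ hr0')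
  have hunit : IsUnit (⟨w * s, hws⟩ : R) := hr _ ⟨⟨c, hcR⟩, Subtype.ext hr_eq⟩
  exact isUnit_of_mul_isUnit_left (hunit.map R.subtype)

theorem sqFactClosed_of_squarefree_coe [UniqueFactorizationMonoid A]
    (hunits : ∀ a : A, IsUnit a → a ∈ R)
    (hsf : ∀ r : R, r ≠ 0 → Squarefree r → Squarefree (r : A)) : SqFactClosed R := by
  have := R.wfDvdMonoid hunits
  have hunits' : ∀ e : Aˣ, (e : A) ∈ R := fun e => hunits _ e.isUnit
  intro u v hv huv hne
  have hx0 : (⟨u * u * v, huv⟩ : R) ≠ 0 := fun h => hne congr($h.1)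
  obtain ⟨a, b, hab, hb⟩ := WfDvdMonoid.exists_mul_self_mul_squarefree hx0
  have hb0 : b ≠ 0 := right_ne_zero_of_mul (hab ▸ hx0)
  obtain ⟨e, hue, rfl⟩ := exists_unit_of_mul_self_mul_eq_of_squarefree congr($hab.1).symm
    (left_ne_zero_of_mul (left_ne_zero_of_mul hne)) (sqFreeElem_iff.mp hv).2 (hsf b hb0 hb)
  have hu : u = a * ↑e⁻¹ := by rw [← hue, Units.mul_inv_cancel_right]
  exact ⟨hu ▸ mul_mem a.2 (hunits' e⁻¹), mul_mem (mul_mem (hunits' e) (hunits' e)) b.2⟩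

end Subring

theorem jedrzejewicz_zielinski_squarefree_iff_sqFactClosed_general
    {A : Type*} [CommRing A] [UniqueFactorizationMonoid A]
    (R : Subring A)
    (hunits : ∀ a : A, IsUnit a → a ∈ R) :
    (∀ r : R, SqFreeElem r → SqFreeElem (r : A)) ↔ SqFactClosed R := by
  have hsf : (∀ r : R, SqFreeElem r → SqFreeElem (r : A)) ↔
      ∀ r : R, r ≠ 0 → Squarefree r → Squarefree (r : A) := by
    simp only [sqFreeElem_iff, ne_eq, ZeroMemClass.coe_eq_zero, and_imp]
    exact forall_congr' fun r => imp_congr_right fun hr0 => imp_congr_right fun _ =>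
      and_iff_right hr0
  rw [hsf]
  exact ⟨R.sqFactClosed_of_squarefree_coe hunits, R.squarefree_coe_of_sqFactClosed⟩

/-- (Jedrzejewicz–Zieliński) Let `A` be a UFD and `R ⊆ A` a subring with
`R* = A*` and `F(R) ∩ A = R`. Then the square-free elements of `R` are
square-free in `A` if and only if `R` is square-factorially closed in `A`. -/
theorem jedrzejewicz_zielinski_squarefree_iff_sqFactClosed
    {A : Type*} [CommRing A] [IsDomain A] [UniqueFactorizationMonoid A]
    (R : Subring A)
    (hunits : ∀ a : A, IsUnit a → a ∈ R)
    (hfrac : ∀ a : A, (∃ r ∈ R, ∃ s ∈ R, s ≠ 0 ∧ s * a = r) → a ∈ R) :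
    (∀ r : R, SqFreeElem r → SqFreeElem (r : A)) ↔ SqFactClosed R :=
  jedrzejewicz_zielinski_squarefree_iff_sqFactClosed_general R hunits
end

section
/- (Jedrzejewicz–Zieliński) Let A be a UFD and R ⊆ A a subring such that R* = A* (the units of R and of A coincide) and F(R) ∩ A = R, where F(R) is the field of fractions of R viewed inside the field of fractions of A. If R is square-factorially closed in A, then R is root closed in A: for every u ∈ A and every n ≥ 1, if uⁿ ∈ R then u ∈ R. -/
/-- In a UFD every nonzero element can be written as `s * s * t` with `t`
square-free. -/
theorem exists_sq_mul_sqFreeElem {A : Type*} [CommRing A] [IsDomain A]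
    [UniqueFactorizationMonoid A] :
    ∀ u : A, u ≠ 0 → ∃ s t : A, SqFreeElem t ∧ u = s * s * t := by
  have wf : WellFounded (DvdNotUnit (α := A)) := wellFounded_dvdNotUnit
  intro u
  refine WellFounded.induction wf
    (C := fun u => u ≠ 0 → ∃ s t : A, SqFreeElem t ∧ u = s * s * t) u ?_
  intro u ih hu
  by_cases hsq : ∀ w : A, ¬ IsUnit w → ¬ (w * w ∣ u)
  · exact ⟨1, u, ⟨hu, hsq⟩, by ring⟩
  · push_neg at hsq
    obtain ⟨w, hw, c, hc⟩ := hsq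
    have hc0 : c ≠ 0 := by
      rintro rfl; exact hu (by simp [hc])
    have hdnu : DvdNotUnit c u := by
      refine ⟨hc0, w * w, ?_, by rw [hc]; ring⟩
      intro h
      exact hw (isUnit_of_mul_isUnit_left h)
    obtain ⟨s, t, ht, hst⟩ := ih c hdnu hc0
    exact ⟨w * s, t, ht, by rw [hc, hst]; ring⟩

/-- (Jedrzejewicz–Zieliński) Let `A` be a UFD and `R ⊆ A` a subring with
`R* = A*` and `F(R) ∩ A = R`. If `R` is square-factorially closed in `A`,
then `R` is root closed in `A`: `uⁿ ∈ R` with `n ≥ 1` implies `u ∈ R`. -/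
theorem jedrzejewicz_zielinski_sqFactClosed_imp_rootClosed
    {A : Type*} [CommRing A] [IsDomain A] [UniqueFactorizationMonoid A]
    (R : Subring A)
    (hunits : ∀ a : A, IsUnit a → a ∈ R)
    (hfrac : ∀ a : A, (∃ r ∈ R, ∃ s ∈ R, s ≠ 0 ∧ s * a = r) → a ∈ R)
    (hsf : SqFactClosed R) :
    ∀ u : A, ∀ n : ℕ, 1 ≤ n → u ^ n ∈ R → u ∈ R := by
  have wf : WellFounded (DvdNotUnit (α := A)) := wellFounded_dvdNotUnit
  have one_sf : SqFreeElem (1 : A) := by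
    refine ⟨one_ne_zero, fun w hw hdvd => hw (isUnit_of_mul_isUnit_left (isUnit_of_dvd_one hdvd))⟩
  intro u
  refine WellFounded.induction wf
    (C := fun u => ∀ n : ℕ, 1 ≤ n → u ^ n ∈ R → u ∈ R) u ?_
  intro u ihu n
  induction n using Nat.strong_induction_on with
  | _ n ihn =>
  intro hn hun
  by_cases hu0 : u = 0
  · simpa [hu0] using R.zero_mem
  rcases Nat.even_or_odd n with he | ho
  · -- even case : n = 2 * m
    obtain ⟨m, hm⟩ := he
    have hm1 : 1 ≤ m := by omega
    have hpow : u ^ n = u ^ m * u ^ m * 1 := by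
      rw [hm]; ring
    have hne : u ^ m * u ^ m * 1 ≠ 0 := by
      rw [← hpow]; exact pow_ne_zero _ hu0
    have := hsf (u ^ m) 1 one_sf (by rwa [← hpow]) hne
    exact ihn m (by omega) hm1 this.1
  · -- odd case : n = 2 * m + 1
    obtain ⟨m, hm⟩ := ho
    obtain ⟨s, t, ht, hst⟩ := exists_sq_mul_sqFreeElem u hu0
    have hs0 : s ≠ 0 := by rintro rfl; exact hu0 (by simp [hst])
    have ht0 : t ≠ 0 := ht.1
    have hpow : u ^ n = (s ^ n * t ^ m) * (s ^ n * t ^ m) * t := by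
      rw [hst, hm]; ring
    have hne : (s ^ n * t ^ m) * (s ^ n * t ^ m) * t ≠ 0 := by
      rw [← hpow]; exact pow_ne_zero _ hu0
    obtain ⟨hw, htR⟩ := hsf (s ^ n * t ^ m) t ht (by rwa [← hpow]) hne
    -- deduce s ^ n ∈ R by fraction-closedness
    have hsnR : s ^ n ∈ R :=
      hfrac _ ⟨s ^ n * t ^ m, hw, t ^ m, R.pow_mem htR m, pow_ne_zero _ ht0, by ring⟩
    -- deduce s ∈ R
    have hsR : s ∈ R := by
      by_cases hsu : IsUnit s
      · exact hunits s hsu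
      · refine ihu s ⟨hs0, s * t, fun h => hsu (isUnit_of_mul_isUnit_left h), ?_⟩ n hn hsnR
        rw [hst]; ring
    rw [hst]
    exact R.mul_mem (R.mul_mem hsR hsR) htR
end

section
/- Let p, q ∈ ℂ[x,y] with Jac(p,q) = p_x q_y − p_y q_x ∈ ℂ*. Then p and q have only finitely many common zeros in ℂ², i.e., the set {(a,b) ∈ ℂ² : p(a,b) = 0 and q(a,b) = 0} is finite. -/
/-!
A common factor of `p` and `q` divides `Jac(p, q)`, so a Keller pair is relatively prime.
Viewing `p, q` as polynomials in `y` over `ℂ[x]`, relative primality persists over the fraction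
field `ℂ(x)` by Gauss's lemma, and clearing denominators in a Bézout relation there gives
`A p + B q = r(x)` with `r ≠ 0`. Hence the `x`-coordinates of common zeros are roots of `r`, and
by symmetry the `y`-coordinates are roots of another nonzero polynomial.
-/

open MvPolynomial

noncomputable section

section FractionRing

open Polynomial

variable {R K : Type*} [CommRing R] [Field K] [Algebra R K] [IsFractionRing R K]

theorem Polynomial.exists_isPrimitive_associated_map [IsDomain R] [IsGCDMonoid R] {d : K[X]}
    (hd : d ≠ 0) : ∃ n : R[X], n.IsPrimitive ∧ Associated d (n.map (algebraMap R K)) := by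
  let : NormalizedGCDMonoid R := Nonempty.some inferInstance
  obtain ⟨b, hb, hbd⟩ := IsLocalization.integerNormalization_spec (nonZeroDivisors R) d
  set n := IsLocalization.integerNormalization (nonZeroDivisors R) d
  have hn : n ≠ 0 := by
    intro h0
    rw [h0, Polynomial.map_zero, eq_comm, smul_eq_zero] at hbd
    exact hbd.elim (nonZeroDivisors.ne_zero hb) hd
  have isUnit_C_map {r : R} (hr : r ≠ 0) : IsUnit (C (algebraMap R K r)) :=
    isUnit_C.2 <| isUnit_iff_ne_zero.2 <| (map_ne_zero_iff _ (IsFractionRing.injective R K)).2 hr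
  have hd_n : Associated d (n.map (algebraMap R K)) := by
    rw [hbd, Algebra.smul_def, algebraMap_apply]
    exact (associated_unit_mul_left _ _ (isUnit_C_map (nonZeroDivisors.ne_zero hb))).symm
  have hn_primPart : Associated (n.map (algebraMap R K)) (n.primPart.map (algebraMap R K)) := by
    conv_lhs => rw [n.eq_C_content_mul_primPart, Polynomial.map_mul, map_C]
    exact associated_unit_mul_left _ _ (isUnit_C_map (mt content_eq_zero_iff.1 hn))
  exact ⟨n.primPart, n.isPrimitive_primPart, hd_n.trans hn_primPart⟩

theorem IsRelPrime.isCoprime_map_algebraMap [IsDomain R] [IsGCDMonoid R] {P Q : R[X]}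
    (h : IsRelPrime P Q) : IsCoprime (P.map (algebraMap R K)) (Q.map (algebraMap R K)) := by
  refine IsRelPrime.isCoprime fun d hdP hdQ ↦ ?_
  rcases eq_or_ne d 0 with rfl | hd
  · have hP := (Polynomial.map_eq_zero_iff (IsFractionRing.injective R K)).1 (zero_dvd_iff.1 hdP)
    have hQ := (Polynomial.map_eq_zero_iff (IsFractionRing.injective R K)).1 (zero_dvd_iff.1 hdQ)
    subst hP hQ
    exact absurd (h dvd_rfl dvd_rfl) not_isUnit_zero
  obtain ⟨n, hn, hdn⟩ := exists_isPrimitive_associated_map (R := R) hd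
  have hnP : n ∣ P := hn.dvd_of_fraction_map_dvd_fraction_map (hdn.dvd_iff_dvd_left.1 hdP)
  have hnQ : n ∣ Q := hn.dvd_of_fraction_map_dvd_fraction_map (hdn.dvd_iff_dvd_left.1 hdQ)
  exact hdn.symm.isUnit ((h hnP hnQ).map (mapRingHom (algebraMap R K)))

theorem Polynomial.exists_mul_add_mul_eq_C_of_isCoprime_map {P Q : R[X]}
    (h : IsCoprime (P.map (algebraMap R K)) (Q.map (algebraMap R K))) :
    ∃ (A B : R[X]) (r : R), r ∈ nonZeroDivisors R ∧ A * P + B * Q = Polynomial.C r := by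
  obtain ⟨u, v, huv⟩ := h
  obtain ⟨a, ha, hau⟩ := IsLocalization.integerNormalization_spec (nonZeroDivisors R) u
  obtain ⟨b, hb, hbv⟩ := IsLocalization.integerNormalization_spec (nonZeroDivisors R) v
  refine ⟨C b * IsLocalization.integerNormalization (nonZeroDivisors R) u,
    C a * IsLocalization.integerNormalization (nonZeroDivisors R) v, a * b,
    mul_mem ha hb, ?_⟩
  apply map_injective _ (IsFractionRing.injective R K)
  simp only [Polynomial.map_add, Polynomial.map_mul, map_C, hau, hbv, Algebra.smul_def,
    algebraMap_apply, map_mul]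
  linear_combination C (algebraMap R K a) * C (algebraMap R K b) * huv

theorem IsRelPrime.exists_mul_add_mul_eq_C [IsDomain R] [IsGCDMonoid R] {P Q : R[X]}
    (h : IsRelPrime P Q) : ∃ (A B : R[X]) (r : R), r ≠ 0 ∧ A * P + B * Q = Polynomial.C r :=
  have ⟨A, B, r, hr, hABr⟩ :=
    exists_mul_add_mul_eq_C_of_isCoprime_map (K := FractionRing R) h.isCoprime_map_algebraMap
  ⟨A, B, r, nonZeroDivisors.ne_zero hr, hABr⟩

end FractionRing

open scoped Polynomial.Bivariate

namespace Polynomial.Bivariate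

open Polynomial

variable {K : Type*} [Field K]

theorem evalEval_swap (x y : K) (P : K[X][Y]) : (swap P).evalEval x y = P.evalEval y x := by
  simpa only [coe_aevalAeval_eq_evalEval] using aevalAeval_swap x y P

theorem exists_ne_zero_eval_eq_zero_of_isRelPrime {P Q : K[X][Y]} (h : IsRelPrime P Q) :
    ∃ r : K[X], r ≠ 0 ∧ ∀ x y, P.evalEval x y = 0 → Q.evalEval x y = 0 → r.eval x = 0 := by
  obtain ⟨A, B, r, hr, hABr⟩ := h.exists_mul_add_mul_eq_C
  refine ⟨r, hr, fun x y hP hQ ↦ ?_⟩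
  have := congrArg (evalEval x y) hABr
  rwa [evalEval_add, evalEval_mul, evalEval_mul, hP, hQ, evalEval_C, mul_zero, mul_zero,
    add_zero, eq_comm] at this

theorem finite_setOf_evalEval_eq_zero_of_isRelPrime {P Q : K[X][Y]} (h : IsRelPrime P Q) :
    {z : K × K | P.evalEval z.1 z.2 = 0 ∧ Q.evalEval z.1 z.2 = 0}.Finite := by
  obtain ⟨r, hr, hr_eval⟩ := exists_ne_zero_eval_eq_zero_of_isRelPrime h
  have h_swap : IsRelPrime (swap P) (swap Q) :=
    IsRelPrime.of_map swap.symm (by simpa only [AlgEquiv.symm_apply_apply] using h)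
  obtain ⟨s, hs, hs_eval⟩ := exists_ne_zero_eval_eq_zero_of_isRelPrime h_swap
  refine ((finite_setOfPred_isRoot hr).prod (finite_setOfPred_isRoot hs)).subset ?_
  rintro ⟨x, y⟩ ⟨hP, hQ⟩
  exact ⟨hr_eval x y hP hQ, hs_eval y x (by rwa [evalEval_swap]) (by rwa [evalEval_swap])⟩

end Polynomial.Bivariate

namespace MvPolynomial

open Polynomial Polynomial.Bivariate

theorem eval_equivMvPolynomial {R : Type*} [CommSemiring R] (x y : R) (P : R[X][Y]) :
    eval ![x, y] (equivMvPolynomial R P) = P.evalEval x y := by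
  have h : (aeval ![x, y]).comp (equivMvPolynomial R).toAlgHom = aevalAeval x y := by
    ext <;> simp
  rw [← coe_aevalAeval_eq_evalEval, ← h, ← coe_aeval_eq_eval]
  rfl

theorem finite_setOf_eval_eq_zero_of_isRelPrime {K : Type*} [Field K]
    {p q : MvPolynomial (Fin 2) K} (h : IsRelPrime p q) :
    {z : K × K | eval ![z.1, z.2] p = 0 ∧ eval ![z.1, z.2] q = 0}.Finite := by
  set e := equivMvPolynomial K
  have h' : IsRelPrime (e.symm p) (e.symm q) :=
    IsRelPrime.of_map e (by simpa only [AlgEquiv.apply_symm_apply] using h)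
  have h_eval (r : MvPolynomial (Fin 2) K) (z : K × K) :
      eval ![z.1, z.2] r = (e.symm r).evalEval z.1 z.2 := by
    rw [← eval_equivMvPolynomial, e.apply_symm_apply]
  simpa only [h_eval] using finite_setOf_evalEval_eq_zero_of_isRelPrime h'

end MvPolynomial

theorem Derivation.dvd_mul_sub_mul_of_dvd {R A : Type*} [CommSemiring R] [CommRing A]
    [Algebra R A] (D E : Derivation R A A) {d p q : A} (hp : d ∣ p) (hq : d ∣ q) :
    d ∣ D p * E q - E p * D q := by
  obtain ⟨a, rfl⟩ := hp
  obtain ⟨b, rfl⟩ := hq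
  simp only [Derivation.leibniz, smul_eq_mul]
  -- after expanding, the two `a * b * D d * E d` terms cancel
  exact ⟨a * D d * E b + D a * b * E d - a * E d * D b - E a * b * D d
    + d * (D a * E b - E a * D b), by ring⟩

theorem IsKeller.isRelPrime {p q : Rxy} (hK : IsKeller p q) : IsRelPrime p q := by
  obtain ⟨c, hc, hpq⟩ := hK
  intro d hdp hdq
  have hd : d ∣ MvPolynomial.C c := hpq ▸ Derivation.dvd_mul_sub_mul_of_dvd _ _ hdp hdq
  exact isUnit_of_dvd_unit hd ((isUnit_iff_ne_zero.2 hc).map MvPolynomial.C)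

/-- A Keller pair (p,q) has only finitely many common zeros in ℂ². -/
theorem keller_finitely_many_common_zeros (p q : Rxy) (hK : IsKeller p q) :
    Set.Finite {z : ℂ × ℂ | eval ![z.1, z.2] p = 0 ∧ eval ![z.1, z.2] q = 0} :=
  MvPolynomial.finite_setOf_eval_eq_zero_of_isRelPrime hK.isRelPrime
end
end

section
/- Let p, q ∈ ℂ[x,y] with Jac(p,q) = p_x q_y − p_y q_x ∈ ℂ*. In the Keller map proof setting, p and q have no common nonconstant factor in ℂ[x,y]: there is no r ∈ ℂ[x,y] of total degree at least 1 dividing both p and q. -/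
open MvPolynomial

noncomputable section

/-! A common factor `r` of `p` and `q` divides `Jac(p,q)`: modulo `r` the Jacobian of `(r a, r b)`
reduces to `a b Jac(r, r) = 0`. As `Jac(p,q)` is a unit of `ℂ[x,y]`, so is `r`, and the units of
`ℂ[x,y]` are the nonzero constants. -/

theorem jacPQ_mul_mul (r a b : Rxy) :
    jacPQ (r * a) (r * b) = r * (a * jacPQ r b + b * jacPQ a r + r * jacPQ a b) := by
  simp only [jacPQ, Derivation.leibniz, smul_eq_mul]
  ring

theorem dvd_jacPQ {r p q : Rxy} (hp : r ∣ p) (hq : r ∣ q) : r ∣ jacPQ p q := by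
  obtain ⟨a, rfl⟩ := hp
  obtain ⟨b, rfl⟩ := hq
  exact ⟨_, jacPQ_mul_mul r a b⟩

theorem IsKeller.isUnit_jacPQ {p q : Rxy} (hK : IsKeller p q) : IsUnit (jacPQ p q) := by
  obtain ⟨c, hc, hjac⟩ := hK
  exact hjac ▸ hc.isUnit.map C

theorem IsKeller.isUnit_of_dvd {p q r : Rxy} (hK : IsKeller p q) (hp : r ∣ p) (hq : r ∣ q) :
    IsUnit r :=
  isUnit_of_dvd_unit (dvd_jacPQ hp hq) hK.isUnit_jacPQ

/-- A Keller pair (p,q) has no common nonconstant factor: there is no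
polynomial of total degree at least 1 dividing both p and q. -/
theorem keller_no_common_nonconstant_factor (p q : Rxy) (hK : IsKeller p q) :
    ¬ ∃ r : Rxy, 1 ≤ r.totalDegree ∧ r ∣ p ∧ r ∣ q := by
  rintro ⟨r, hdeg, hp, hq⟩
  have hr : r.totalDegree = 0 :=
    (isUnit_iff_totalDegree_of_isReduced.mp (hK.isUnit_of_dvd hp hq)).2
  omega
end
end
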